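/- arXiv:2405.20246 — 3 statements merged into one kernel-verified Lean document; each statement's English description precedes it below -/
import Mathlib

section
/- Let 𝔯 be a solvable Lie algebra with derived series 𝔯₀ = 𝔯, 𝔯_{i+1} = ⁅𝔯_i, 𝔯_i⁆, terminating with 𝔯_k ≠ 0 and 𝔯_{k+1} = 0, and let 𝔞(𝔯) = z(𝔯₀) + z(𝔯₁) + ⋯ + z(𝔯_k). Then 𝔞(𝔯) is an abelian ideal of 𝔯: ⁅𝔯, 𝔞(𝔯)⁆ ⊆ 𝔞(𝔯) and ⁅x, y⁆ = 0 for all x, y ∈ 𝔞(𝔯). -/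
/-!
Each `z(𝔯ᵢ)` is stable under every `ad X` by the Jacobi identity, since `𝔯ᵢ` is an ideal; hence
so is their sum. The derived series is decreasing, so for `i ≤ j` an element of `z(𝔯ᵢ)`
commutes with all of `𝔯ⱼ ⊇ z(𝔯ⱼ)`: the centers commute pairwise, and therefore their sum is
abelian.
-/

/-- The center `z(I) = {x ∈ I : ⁅x, y⁆ = 0 for all y ∈ I}` of an ideal `I` of a Lie
algebra, as a submodule of the ambient Lie algebra. -/
def lieIdealCenter {K : Type*} [Field K] {L : Type*} [LieRing L] [LieAlgebra K L]
    (I : LieIdeal K L) : Submodule K L where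
  carrier := {x : L | x ∈ I ∧ ∀ y ∈ I, ⁅x, y⁆ = 0}
  add_mem' := by
    rintro a b ⟨haI, ha⟩ ⟨hbI, hb⟩
    exact ⟨I.add_mem haI hbI, fun y hy => by rw [add_lie, ha y hy, hb y hy, add_zero]⟩
  zero_mem' := ⟨I.zero_mem, fun y _ => zero_lie y⟩
  smul_mem' := by
    rintro t a ⟨haI, ha⟩
    exact ⟨I.smul_mem t haI, fun y hy => by rw [smul_lie, ha y hy, smul_zero]⟩

open LieAlgebra

section FinsetSum

variable {R M ι : Type*} [Semiring R] [AddCommMonoid M] [Module R M]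
  {s : Finset ι} {p : ι → Submodule R M}

theorem Submodule.finsetSum_le {q : Submodule R M} (h : ∀ i ∈ s, p i ≤ q) :
    ∑ i ∈ s, p i ≤ q :=
  Finset.sum_induction p (· ≤ q) (fun _ _ => sup_le) bot_le h

theorem Module.End.finsetSum_mem_invtSubmodule (f : Module.End R M)
    (h : ∀ i ∈ s, p i ∈ f.invtSubmodule) : ∑ i ∈ s, p i ∈ f.invtSubmodule :=
  Finset.sum_induction p (· ∈ f.invtSubmodule) (fun _ _ => invtSubmodule.sup_mem)
    (invtSubmodule.bot_mem f) h

end FinsetSum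

theorem lie_eq_zero_of_mem_finsetSum {R L ι : Type*} [CommRing R] [LieRing L] [LieAlgebra R L]
    {s : Finset ι} {p : ι → Submodule R L}
    (h : ∀ i ∈ s, ∀ j ∈ s, ∀ x ∈ p i, ∀ y ∈ p j, ⁅x, y⁆ = 0)
    {x y : L} (hx : x ∈ ∑ i ∈ s, p i) (hy : y ∈ ∑ i ∈ s, p i) : ⁅x, y⁆ = 0 := by
  have hker : ∀ j ∈ s, ∀ z ∈ p j, ∑ i ∈ s, p i ≤ LinearMap.ker (ad R L z) :=
    fun j hj z hz => Submodule.finsetSum_le fun i hi w hw => h j hj i hi z hz w hw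
  have hx_ker : ∑ i ∈ s, p i ≤ LinearMap.ker (ad R L x) :=
    Submodule.finsetSum_le fun j hj z hz => by
      rw [LinearMap.mem_ker, ad_apply, ← lie_skew, neg_eq_zero]
      exact hker j hj z hz hx
  exact hx_ker hy

section LieIdealCenter

variable {K L : Type*} [Field K] [LieRing L] [LieAlgebra K L]

theorem lieIdealCenter_mem_invtSubmodule_ad (I : LieIdeal K L) (X : L) :
    lieIdealCenter I ∈ (ad K L X).invtSubmodule := by
  rintro x ⟨hxI, hx⟩
  refine ⟨I.lie_mem hxI, fun y hy => ?_⟩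
  change ⁅⁅X, x⁆, y⁆ = 0
  rw [lie_lie, hx y hy, hx _ (I.lie_mem hy), lie_zero, sub_zero]

theorem lie_eq_zero_of_mem_lieIdealCenter_derivedSeries (i j : ℕ) {x y : L}
    (hx : x ∈ lieIdealCenter (derivedSeries K L i))
    (hy : y ∈ lieIdealCenter (derivedSeries K L j)) : ⁅x, y⁆ = 0 := by
  rcases le_total i j with hij | hji
  · exact hx.2 y (derivedSeriesOfIdeal_antitone (I := ⊤) hij hy.1)
  · rw [← lie_skew, hy.2 x (derivedSeriesOfIdeal_antitone (I := ⊤) hji hx.1), neg_zero]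

end LieIdealCenter

theorem a_r_abelian_ideal_general
    {K : Type*} [Field K] {L : Type*} [LieRing L] [LieAlgebra K L]
    (k : ℕ) :
    (∀ X : L, ∀ x ∈ ∑ i ∈ Finset.range (k + 1),
        lieIdealCenter (LieAlgebra.derivedSeries K L i),
      ⁅X, x⁆ ∈ ∑ i ∈ Finset.range (k + 1),
        lieIdealCenter (LieAlgebra.derivedSeries K L i)) ∧
    (∀ x ∈ ∑ i ∈ Finset.range (k + 1), lieIdealCenter (LieAlgebra.derivedSeries K L i),
      ∀ y ∈ ∑ i ∈ Finset.range (k + 1), lieIdealCenter (LieAlgebra.derivedSeries K L i),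
        ⁅x, y⁆ = 0) :=
  ⟨fun X => Module.End.finsetSum_mem_invtSubmodule (ad K L X)
      fun _ _ => lieIdealCenter_mem_invtSubmodule_ad _ X,
    fun _ hx _ hy => lie_eq_zero_of_mem_finsetSum
      (fun i _ j _ _ hx _ hy => lie_eq_zero_of_mem_lieIdealCenter_derivedSeries i j hx hy) hx hy⟩

/-- If `𝔯` is a solvable Lie algebra with derived series `𝔯₀ = 𝔯`, `𝔯_{i+1} = ⁅𝔯_i, 𝔯_i⁆`
terminating with `𝔯_k ≠ 0`, `𝔯_{k+1} = 0`, then `𝔞(𝔯) = z(𝔯₀) + ⋯ + z(𝔯_k)` is an abelian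
ideal of `𝔯`. -/
theorem a_r_abelian_ideal
    {K : Type*} [Field K] {L : Type*} [LieRing L] [LieAlgebra K L]
    [LieAlgebra.IsSolvable L] (k : ℕ)
    (hk : LieAlgebra.derivedSeries K L k ≠ ⊥)
    (hk1 : LieAlgebra.derivedSeries K L (k + 1) = ⊥) :
    (∀ X : L, ∀ x ∈ ∑ i ∈ Finset.range (k + 1),
        lieIdealCenter (LieAlgebra.derivedSeries K L i),
      ⁅X, x⁆ ∈ ∑ i ∈ Finset.range (k + 1),
        lieIdealCenter (LieAlgebra.derivedSeries K L i)) ∧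
    (∀ x ∈ ∑ i ∈ Finset.range (k + 1), lieIdealCenter (LieAlgebra.derivedSeries K L i),
      ∀ y ∈ ∑ i ∈ Finset.range (k + 1), lieIdealCenter (LieAlgebra.derivedSeries K L i),
        ⁅x, y⁆ = 0) :=
  a_r_abelian_ideal_general k
end

section
/- (Proposition 3.5) Let 𝔯 be a solvable Lie algebra and let i ≠ 0 be an ideal of 𝔯. Then i ∩ 𝔞(𝔯) ≠ 0, where 𝔞(𝔯) = z(𝔯₀) + z(𝔯₁) + ⋯ + z(𝔯_k). -/
/-! Take the last term `𝔯_j` of the derived series meeting `I` nontrivially. For `x ∈ I ∩ 𝔯_j`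
and `y ∈ 𝔯_j`, the bracket `⁅x, y⁆` lies in `I ∩ 𝔯_{j+1} = 0`, so `I ∩ 𝔯_j ⊆ z(𝔯_j) ⊆ 𝔞(𝔯)`. -/

open LieAlgebra

section

variable {K : Type*} [Field K] {L : Type*} [LieRing L] [LieAlgebra K L]

theorem inf_le_lieIdealCenter_of_inf_lie_eq_bot {I J : LieIdeal K L} (h : I ⊓ ⁅J, J⁆ = ⊥) :
    (I : Submodule K L) ⊓ J ≤ lieIdealCenter J := by
  rintro x ⟨hxI, hxJ⟩
  refine ⟨hxJ, fun y hy => ?_⟩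
  have hxy : ⁅x, y⁆ ∈ I ⊓ ⁅J, J⁆ :=
    ⟨by rw [← lie_skew]; exact neg_mem (I.lie_mem hxI), LieSubmodule.lie_mem_lie hxJ hy⟩
  rwa [h] at hxy

theorem exists_inf_derivedSeries_ne_bot_and_succ_eq_bot {R : Type*} [CommRing R]
    [LieAlgebra R L] {I : LieIdeal R L} (hI : I ≠ ⊥) {k : ℕ} (hk : derivedSeries R L (k + 1) = ⊥) :
    ∃ j ≤ k, I ⊓ derivedSeries R L j ≠ ⊥ ∧ I ⊓ derivedSeries R L (j + 1) = ⊥ := by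
  obtain ⟨j, hj, hj1⟩ := Nat.exists_not_and_succ_of_not_zero_of_exists
    (p := fun j => I ⊓ derivedSeries R L j = ⊥) (by simpa using hI) ⟨k + 1, by rw [hk, inf_bot_eq]⟩
  refine ⟨j, ?_, hj, hj1⟩
  by_contra! hkj
  refine hj (eq_bot_iff.2 (inf_le_right.trans ?_))
  exact hk ▸ derivedSeriesOfIdeal_antitone ⊤ hkj

end

theorem ideal_inf_a_r_ne_bot_general
    {K : Type*} [Field K] {L : Type*} [LieRing L] [LieAlgebra K L]
    (k : ℕ)
    (hk1 : LieAlgebra.derivedSeries K L (k + 1) = ⊥)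
    (I : LieIdeal K L) (hI : I ≠ ⊥) :
    ((I : Submodule K L) ⊓
      ∑ i ∈ Finset.range (k + 1), lieIdealCenter (LieAlgebra.derivedSeries K L i)) ≠ ⊥ := by
  obtain ⟨j, hjk, hj, hj1⟩ := exists_inf_derivedSeries_ne_bot_and_succ_eq_bot hI hk1
  have hcenter :
      (I : Submodule K L) ⊓ derivedSeries K L j ≤ lieIdealCenter (derivedSeries K L j) :=
    inf_le_lieIdealCenter_of_inf_lie_eq_bot (derivedSeriesOfIdeal_succ K L ⊤ j ▸ hj1)
  have hsum : lieIdealCenter (derivedSeries K L j) ≤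
      ∑ i ∈ Finset.range (k + 1), lieIdealCenter (derivedSeries K L i) :=
    Finset.single_le_sum (f := fun i => lieIdealCenter (derivedSeries K L i)) (fun _ _ => bot_le)
      (Finset.mem_range.2 (Nat.lt_succ_of_le hjk))
  obtain ⟨x, hx, hx0⟩ := (Submodule.ne_bot_iff _).1 (mt (LieSubmodule.toSubmodule_eq_bot _).1 hj)
  obtain ⟨hxI, hxD⟩ := (LieSubmodule.mem_inf _ _ _).1 hx
  exact (Submodule.ne_bot_iff _).2 ⟨x, ⟨hxI, hsum (hcenter ⟨hxI, hxD⟩)⟩, hx0⟩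

/-- (Proposition 3.5) If `𝔯` is a solvable Lie algebra and `I ≠ 0` is an ideal of `𝔯`,
then `I ∩ 𝔞(𝔯) ≠ 0`, where `𝔞(𝔯) = z(𝔯₀) + z(𝔯₁) + ⋯ + z(𝔯_k)`. -/
theorem ideal_inf_a_r_ne_bot
    {K : Type*} [Field K] {L : Type*} [LieRing L] [LieAlgebra K L]
    [LieAlgebra.IsSolvable L] (k : ℕ)
    (hk : LieAlgebra.derivedSeries K L k ≠ ⊥)
    (hk1 : LieAlgebra.derivedSeries K L (k + 1) = ⊥)
    (I : LieIdeal K L) (hI : I ≠ ⊥) :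
    ((I : Submodule K L) ⊓
      ∑ i ∈ Finset.range (k + 1), lieIdealCenter (LieAlgebra.derivedSeries K L i)) ≠ ⊥ :=
  ideal_inf_a_r_ne_bot_general k hk1 I hI
end

section
/- Let U = ℝ × ℝ × (0, ∞) × ℝ ⊆ ℝ⁴ with coordinates (x¹, x², r, v), and define the smooth vector fields K₁(x¹, x², r, v) = (0, 0, 0, 1) (i.e. ∂_v) and K₂(x¹, x², r, v) = (0, 0, −r, v) (i.e. v∂_v − r∂_r), and let 𝔨 = span_ℝ{K₁, K₂}. A smooth vector field X on U satisfies ⁅X, K⁆ ∈ 𝔨 for every K ∈ 𝔨 if and only if there exist constants c₁, c₂ ∈ ℝ and smooth functions a₁, a₂, a₃, a₄ : ℝ² → ℝ such that X(x¹, x², r, v) = (a₁(x¹, x²), a₂(x¹, x²), (a₃(x¹, x²) − c₂)·r, c₁ + c₂·v + a₄(x¹, x²)/r). -/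
set_option maxHeartbeats 1000000


/-- The Lie bracket of two vector fields on `ℝ⁴`,
`⁅X, Y⁆(p) = DY(p)·X(p) − DX(p)·Y(p)`. -/
noncomputable def vfLieBracket (X Y : (Fin 4 → ℝ) → (Fin 4 → ℝ)) (p : Fin 4 → ℝ) :
    Fin 4 → ℝ :=
  fderiv ℝ Y p (X p) - fderiv ℝ X p (Y p)

/-- The vector field `∂_v` in coordinates `(x¹, x², r, v)`. -/
def solK₁ : (Fin 4 → ℝ) → (Fin 4 → ℝ) := fun _ => ![0, 0, 0, 1]

/-- The vector field `v ∂_v − r ∂_r` in coordinates `(x¹, x², r, v)`. -/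
def solK₂ : (Fin 4 → ℝ) → (Fin 4 → ℝ) := fun p => ![0, 0, -p 2, p 3]

abbrev V : Type := Fin 4 → ℝ

noncomputable section
namespace S2

open ContinuousLinearMap

def USet : Set V := {p | 0 < p 2}

lemma isOpen_U : IsOpen USet := isOpen_lt continuous_const (continuous_apply 2)

def L2 : V →L[ℝ] V :=
  ContinuousLinearMap.pi ![0, 0, -ContinuousLinearMap.proj 2, ContinuousLinearMap.proj 3]

lemma L2_apply (w : V) : L2 w = ![0, 0, -w 2, w 3] := by
  funext i
  fin_cases i <;> simp [L2, ContinuousLinearMap.pi_apply]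

lemma solK₂_eq : solK₂ = ⇑L2 := by
  funext q; exact (L2_apply q).symm

section Stage1
variable (X : V → V) (hX : ContDiffOn ℝ (⊤ : ℕ∞) X USet)

theorem stage1 (μ₁ μ₂ : ℝ)
    (h1 : ∀ p : V, 0 < p 2 → vfLieBracket X solK₁ p = μ₁ • solK₁ p + μ₂ • solK₂ p) :
    ∀ p : V, 0 < p 2 → fderiv ℝ X p ![0,0,0,1] = ![0, 0, μ₂ * p 2, -μ₁ - μ₂ * p 3] := by
  intro p hp
  have hb := h1 p hp
  unfold vfLieBracket at hb
  have hc : fderiv ℝ solK₁ p = 0 := by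
    rw [show solK₁ = fun _ : V => (![0,0,0,1] : V) from rfl]
    exact fderiv_const_apply _
  rw [hc] at hb
  simp only [solK₁, solK₂] at hb
  have e0 := congrFun hb (0 : Fin 4)
  have e1 := congrFun hb (1 : Fin 4)
  have e2 := congrFun hb (2 : Fin 4)
  have e3 := congrFun hb (3 : Fin 4)
  simp [Matrix.vecHead, Matrix.vecTail, show (Fin.succ 2 : Fin 4) = 3 from rfl,
    show (Fin.succ 0 : Fin 4) = 1 from rfl, show (Fin.succ 1 : Fin 4) = 2 from rfl] at e0 e1 e2 e3
  funext i
  fin_cases i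
  · simp
    first | exact e0 | linarith | linear_combination e0 | linear_combination -e0
  · simp
    first | exact e1 | linarith | linear_combination e1 | linear_combination -e1
  · simp
    first | exact e2 | linarith | linear_combination e2 | linear_combination -e2
  · simp
    first | exact e3 | linarith | linear_combination e3 | linear_combination -e3

theorem stage2 (μ₁ μ₂ ν₁ ν₂ : ℝ)
    (hD3 : ∀ p : V, 0 < p 2 → fderiv ℝ X p ![0,0,0,1] = ![0, 0, μ₂ * p 2, -μ₁ - μ₂ * p 3])
    (h2 : ∀ p : V, 0 < p 2 → vfLieBracket X solK₂ p = ν₁ • solK₁ p + ν₂ • solK₂ p) :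
    ∀ p : V, 0 < p 2 → p 2 • fderiv ℝ X p ![0,0,1,0] =
      ![0, 0, μ₂ * p 3 * p 2 + X p 2 - ν₂ * p 2,
        -(μ₁ * p 3) - μ₂ * p 3 ^ 2 - X p 3 + ν₁ + ν₂ * p 3] := by
  intro p hp
  have hb := h2 p hp
  unfold vfLieBracket at hb
  have hc : fderiv ℝ solK₂ p = L2 := by
    rw [solK₂_eq]; exact L2.fderiv
  rw [hc] at hb
  have hdec : solK₂ p = (-(p 2)) • (![0,0,1,0] : V) + (p 3) • ![0,0,0,1] := by
    funext i; fin_cases i <;> simp [solK₂]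
  have hmap : fderiv ℝ X p (solK₂ p)
      = (-(p 2)) • fderiv ℝ X p ![0,0,1,0] + (p 3) • fderiv ℝ X p ![0,0,0,1] := by
    rw [hdec, map_add, map_smul, map_smul]
  rw [hmap, hD3 p hp, L2_apply] at hb
  simp only [solK₁, solK₂] at hb
  have e0 := congrFun hb (0 : Fin 4)
  have e1 := congrFun hb (1 : Fin 4)
  have e2 := congrFun hb (2 : Fin 4)
  have e3 := congrFun hb (3 : Fin 4)
  simp [Matrix.vecHead, Matrix.vecTail, show (Fin.succ 2 : Fin 4) = 3 from rfl,
    show (Fin.succ 0 : Fin 4) = 1 from rfl, show (Fin.succ 1 : Fin 4) = 2 from rfl] at e0 e1 e2 e3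
  funext i
  fin_cases i
  · simp
    first | exact e0 | linarith | linear_combination e0 | linear_combination -e0
  · simp
    first | exact e1 | linarith | linear_combination e1 | linear_combination -e1
  · simp
    first | exact e2 | linarith | linear_combination e2 | linear_combination -e2
  · simp
    first | exact e3 | linarith | linear_combination e3 | linear_combination -e3

end Stage1

section Stage3
open ContinuousLinearMap

theorem stage3 (X : V → V) (hX : ContDiffOn ℝ (⊤ : ℕ∞) X USet) (μ₁ μ₂ ν₁ ν₂ : ℝ)
    (hD3 : ∀ p : V, 0 < p 2 →
      fderiv ℝ X p ![0,0,0,1] = ![0, 0, μ₂ * p 2, -μ₁ - μ₂ * p 3])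
    (hD2 : ∀ p : V, 0 < p 2 → p 2 • fderiv ℝ X p ![0,0,1,0] =
      ![0, 0, μ₂ * p 3 * p 2 + X p 2 - ν₂ * p 2,
        -(μ₁ * p 3) - μ₂ * p 3 ^ 2 - X p 3 + ν₁ + ν₂ * p 3]) :
    μ₂ = 0 ∧ ν₂ = 0 := by
  set p₀ : V := ![0,0,1,0] with hp₀def
  have hp₀ : (0:ℝ) < p₀ 2 := by norm_num [hp₀def]; exact one_pos
  have hp₀U : p₀ ∈ USet := hp₀
  have hU : USet ∈ nhds p₀ := isOpen_U.mem_nhds hp₀U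
  have hXat : ContDiffAt ℝ (⊤ : ℕ∞) X p₀ := hX.contDiffAt hU
  have hsymm : IsSymmSndFDerivAt ℝ X p₀ := hXat.isSymmSndFDerivAt (by rw [minSmoothness_of_isRCLikeNormedField]; exact WithTop.coe_le_coe.2 (le_top : (2:ℕ∞) ≤ ⊤))
  have hΦ : ContDiffOn ℝ 1 (fderiv ℝ X) USet :=
    hX.fderiv_of_isOpen isOpen_U (WithTop.coe_le_coe.2 le_top)
  have hΦd : DifferentiableAt ℝ (fderiv ℝ X) p₀ :=
    (hΦ.contDiffAt hU).differentiableAt one_ne_zero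
  have hflip : ∀ e : V, HasFDerivAt (fun q => fderiv ℝ X q e)
      ((fderiv ℝ (fderiv ℝ X) p₀).flip e) p₀ := by
    intro e
    have := hΦd.hasFDerivAt.clm_apply (hasFDerivAt_const e p₀)
    simpa using this
  -- part (i)
  have hg3 : (fun q => fderiv ℝ X q ![0,0,0,1])
      =ᶠ[nhds p₀] (fun q => (![0, 0, μ₂ * q 2, -μ₁ - μ₂ * q 3] : V)) :=
    Filter.eventuallyEq_of_mem hU (fun q hq => hD3 q (by exact hq))
  have hM3 : HasFDerivAt (fun q : V => (![0, 0, μ₂ * q 2, -μ₁ - μ₂ * q 3] : V))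
      (ContinuousLinearMap.pi (![0, 0, μ₂ • ContinuousLinearMap.proj 2,
        -(μ₂ • ContinuousLinearMap.proj 3)] : Fin 4 → (V →L[ℝ] ℝ))) p₀ := by
    apply hasFDerivAt_pi'.2
    intro i
    fin_cases i <;>
      simp only [ContinuousLinearMap.proj_pi, Matrix.cons_val_zero, Matrix.cons_val_one,
        Matrix.head_cons, Matrix.cons_val_two, Matrix.tail_cons, Matrix.cons_val_three]
    · exact hasFDerivAt_const _ _
    · exact hasFDerivAt_const _ _
    · exact (hasFDerivAt_apply 2 p₀).const_mul μ₂
    · exact ((hasFDerivAt_apply 3 p₀).const_mul μ₂).const_sub (-μ₁)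
  have key3 : (fderiv ℝ (fderiv ℝ X) p₀).flip ![0,0,0,1]
      = ContinuousLinearMap.pi (![0, 0, μ₂ • ContinuousLinearMap.proj 2,
        -(μ₂ • ContinuousLinearMap.proj 3)] : Fin 4 → (V →L[ℝ] ℝ)) :=
    ((hflip ![0,0,0,1]).fderiv.symm.trans hg3.fderiv_eq).trans hM3.fderiv
  -- part (ii)
  have hdX₀ : DifferentiableAt ℝ X p₀ := hXat.differentiableAt (by simp)
  have hXc : ∀ i : Fin 4, HasFDerivAt (fun q => X q i)
      ((ContinuousLinearMap.proj i).comp (fderiv ℝ X p₀)) p₀ :=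
    fun i => hasFDerivAt_pi'.1 hdX₀.hasFDerivAt i
  have hg2 : (fun q : V => q 2 • fderiv ℝ X q ![0,0,1,0])
      =ᶠ[nhds p₀] (fun q => (![0, 0, μ₂ * q 3 * q 2 + X q 2 - ν₂ * q 2,
        -(μ₁ * q 3) - μ₂ * q 3 ^ 2 - X q 3 + ν₁ + ν₂ * q 3] : V)) :=
    Filter.eventuallyEq_of_mem hU (fun q hq => hD2 q (by exact hq))
  have hsmul : HasFDerivAt (fun q : V => q 2 • fderiv ℝ X q ![0,0,1,0])
      (p₀ 2 • ((fderiv ℝ (fderiv ℝ X) p₀).flip ![0,0,1,0])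
        + (ContinuousLinearMap.proj 2 : V →L[ℝ] ℝ).smulRight (fderiv ℝ X p₀ ![0,0,1,0])) p₀ :=
    (hasFDerivAt_apply 2 p₀).smul (hflip ![0,0,1,0])
  have hM2 : HasFDerivAt (fun q : V => (![0, 0, μ₂ * q 3 * q 2 + X q 2 - ν₂ * q 2,
        -(μ₁ * q 3) - μ₂ * q 3 ^ 2 - X q 3 + ν₁ + ν₂ * q 3] : V))
      (ContinuousLinearMap.pi (![0, 0,
        ((μ₂ * p₀ 3) • ContinuousLinearMap.proj 2 + p₀ 2 • (μ₂ • ContinuousLinearMap.proj 3)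
          + (ContinuousLinearMap.proj 2).comp (fderiv ℝ X p₀))
          - ν₂ • ContinuousLinearMap.proj 2,
        ((-(μ₁ • ContinuousLinearMap.proj 3)
          - (μ₂ • (p₀ 3 • ContinuousLinearMap.proj 3 + p₀ 3 • ContinuousLinearMap.proj 3))
          - (ContinuousLinearMap.proj 3).comp (fderiv ℝ X p₀))
          + ν₂ • ContinuousLinearMap.proj 3)] : Fin 4 → (V →L[ℝ] ℝ))) p₀ := by
    apply hasFDerivAt_pi'.2
    intro i
    fin_cases i <;>
      simp only [ContinuousLinearMap.proj_pi, Matrix.cons_val_zero, Matrix.cons_val_one,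
        Matrix.head_cons, Matrix.cons_val_two, Matrix.tail_cons, Matrix.cons_val_three]
    · exact hasFDerivAt_const _ _
    · exact hasFDerivAt_const _ _
    · have h := (((hasFDerivAt_apply 3 p₀).const_mul μ₂).mul (hasFDerivAt_apply 2 p₀)).add
        (hXc 2) |>.sub ((hasFDerivAt_apply 2 p₀).const_mul ν₂)
      convert h using 1
      try ext w
      try simp [smul_smul]
      try ring
      all_goals rfl
    · have hsq : HasFDerivAt (fun q : V => q 3 ^ 2)
          (p₀ 3 • (ContinuousLinearMap.proj 3 : V →L[ℝ] ℝ)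
            + p₀ 3 • (ContinuousLinearMap.proj 3 : V →L[ℝ] ℝ)) p₀ := by
        simp only [pow_two]
        exact (hasFDerivAt_apply 3 p₀).mul (hasFDerivAt_apply 3 p₀)
      have h := ((((hasFDerivAt_apply 3 p₀).const_mul μ₁).neg.sub (hsq.const_mul μ₂)).sub
        (hXc 3)).add_const ν₁ |>.add ((hasFDerivAt_apply 3 p₀).const_mul ν₂)
      convert h using 1
      all_goals rfl
  have key2 : p₀ 2 • ((fderiv ℝ (fderiv ℝ X) p₀).flip ![0,0,1,0])
        + (ContinuousLinearMap.proj 2 : V →L[ℝ] ℝ).smulRight (fderiv ℝ X p₀ ![0,0,1,0])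
      = _ :=
    (hsmul.fderiv.symm.trans hg2.fderiv_eq).trans hM2.fderiv
  -- evaluate
  have hsy := hsymm.eq ![0,0,1,0] ![0,0,0,1]
  have hv3 : fderiv ℝ (fderiv ℝ X) p₀ ![0,0,1,0] ![0,0,0,1]
      = (![0, 0, μ₂, 0] : V) := by
    have := congrArg (fun (L : V →L[ℝ] V) => L ![0,0,1,0]) key3
    simp only [ContinuousLinearMap.flip_apply] at this
    rw [this]
    funext i
    fin_cases i <;> simp [hp₀def]
  have hv2 : fderiv ℝ (fderiv ℝ X) p₀ ![0,0,0,1] ![0,0,1,0]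
      = (![0, 0, 2 * μ₂, ν₂] : V) := by
    have hD3p₀ := hD3 p₀ hp₀
    have heval := congrArg (fun (L : V →L[ℝ] V) => L ![0,0,0,1]) key2
    simp only [ContinuousLinearMap.add_apply, ContinuousLinearMap.smul_apply,
      ContinuousLinearMap.flip_apply, ContinuousLinearMap.smulRight_apply,
      ContinuousLinearMap.proj_apply, hp₀def, Matrix.cons_val_zero, Matrix.cons_val_one,
      Matrix.head_cons, Matrix.cons_val_two, Matrix.tail_cons, Matrix.cons_val_three,
      zero_smul, add_zero, one_smul] at heval
    rw [heval]
    have ea : p₀ 2 = (1:ℝ) := rfl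
    have eb : p₀ 3 = (0:ℝ) := rfl
    have hD3v : (fderiv ℝ X ![0,0,1,0]) ![0,0,0,1] 3 = -μ₁ := by
      have h3 := congrFun hD3p₀ 3
      rw [show (![0, 0, μ₂ * p₀ 2, -μ₁ - μ₂ * p₀ 3] : V) 3 = -μ₁ - μ₂ * p₀ 3 from rfl, eb] at h3
      simpa using h3
    have hD3v2 : (fderiv ℝ X ![0,0,1,0]) ![0,0,0,1] 2 = μ₂ := by
      have h3 := congrFun hD3p₀ 2
      rw [show (![0, 0, μ₂ * p₀ 2, -μ₁ - μ₂ * p₀ 3] : V) 2 = μ₂ * p₀ 2 from rfl, ea] at h3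
      simpa using h3
    funext i
    fin_cases i <;>
      simp [ea, eb, hD3p₀, hD3v, hD3v2, ContinuousLinearMap.pi_apply] <;> try ring
  rw [hv3, hv2] at hsy
  constructor
  · have := congrFun hsy 2
    simp at this
    linarith
  · have := congrFun hsy 3
    simp at this
    linarith

end Stage3

section Stage4
open ContinuousLinearMap

def Slice : Set (ℝ × ℝ) := {z | 0 < z.1}

lemma convex_Slice : Convex ℝ Slice :=
  convex_halfSpace_gt ⟨fun _ _ => rfl, fun _ _ => rfl⟩ 0

lemma const_on_Slice (g : ℝ × ℝ → ℝ) (hg : ∀ z ∈ Slice, HasFDerivAt g (0 : ℝ × ℝ →L[ℝ] ℝ) z)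
    {z : ℝ × ℝ} (hz : z ∈ Slice) : g z = g (1, 0) := by
  have h1 : ((1:ℝ), (0:ℝ)) ∈ Slice := by norm_num [Slice]
  have hb := convex_Slice.norm_image_sub_le_of_norm_hasFDerivWithin_le
    (C := 0) (f' := fun _ => (0 : ℝ × ℝ →L[ℝ] ℝ)) (fun x hx => (hg x hx).hasFDerivWithinAt)
    (fun x _ => by simp) h1 hz
  have : ‖g z - g (1, 0)‖ ≤ 0 := le_trans hb (by simp)
  have := norm_le_zero_iff.1 this
  exact sub_eq_zero.1 this

theorem stage4 (X : V → V) (hX : ContDiffOn ℝ (⊤ : ℕ∞) X USet) (μ₁ ν₁ : ℝ)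
    (hD3 : ∀ p : V, 0 < p 2 → fderiv ℝ X p ![0,0,0,1] = ![0, 0, 0, -μ₁])
    (hD2 : ∀ p : V, 0 < p 2 → p 2 • fderiv ℝ X p ![0,0,1,0] =
      ![0, 0, X p 2, -(μ₁ * p 3) - X p 3 + ν₁]) :
    ∃ c₁ c₂ : ℝ, ∃ a : Fin 4 → (ℝ × ℝ → ℝ),
      (∀ i, ContDiff ℝ (⊤ : ℕ∞) (a i)) ∧
      ∀ p : V, 0 < p 2 →
        X p = ![a 0 (p 0, p 1), a 1 (p 0, p 1), (a 2 (p 0, p 1) - c₂) * p 2,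
                c₁ + c₂ * p 3 + a 3 (p 0, p 1) / p 2] := by
  set b : ℝ × ℝ → V := fun xy => ![xy.1, xy.2, 1, 0] with hbdef
  have hbU : ∀ xy, b xy ∈ USet := fun xy => by
    show (0:ℝ) < b xy 2
    norm_num [hbdef]; exact one_pos
  have hbC : ContDiff ℝ (⊤ : ℕ∞) b := by
    apply contDiff_pi.2
    intro i
    fin_cases i <;> simp [hbdef] <;>
      first | exact contDiff_fst | exact contDiff_snd | exact contDiff_const
  have hXb : ContDiff ℝ (⊤ : ℕ∞) (fun xy => X (b xy)) := hX.comp_contDiff hbC hbU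
  refine ⟨ν₁, -μ₁,
    ![fun xy => X (b xy) 0, fun xy => X (b xy) 1,
      fun xy => X (b xy) 2 - μ₁, fun xy => X (b xy) 3 - ν₁], ?_, ?_⟩
  · intro i
    have hc : ∀ j : Fin 4, ContDiff ℝ (⊤ : ℕ∞) (fun xy => X (b xy) j) := fun j =>
      (ContinuousLinearMap.proj j : V →L[ℝ] ℝ).contDiff.comp hXb
    fin_cases i <;> simp
    · exact hc 0
    · exact hc 1
    · exact (hc 2).sub contDiff_const
    · exact (hc 3).sub contDiff_const
  intro p hp
  -- slice setup
  set J : ℝ × ℝ →L[ℝ] V := ContinuousLinearMap.pi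
    (![0, 0, ContinuousLinearMap.fst ℝ ℝ ℝ, ContinuousLinearMap.snd ℝ ℝ ℝ] :
      Fin 4 → (ℝ × ℝ →L[ℝ] ℝ)) with hJdef
  set α : ℝ × ℝ → V := fun z => ![p 0, p 1, z.1, z.2] with hαdef
  have hJw : ∀ w : ℝ × ℝ, J w = w.1 • (![0,0,1,0] : V) + w.2 • (![0,0,0,1] : V) := by
    intro w; funext i; fin_cases i <;> simp [hJdef, ContinuousLinearMap.pi_apply]
  have hα : ∀ z : ℝ × ℝ, HasFDerivAt α J z := by
    intro z
    have hrw : α = fun z : ℝ × ℝ => (![p 0, p 1, 0, 0] : V) + J z := by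
      funext z i
      fin_cases i <;> simp [hαdef, hJdef, ContinuousLinearMap.pi_apply]
    rw [hrw]
    exact J.hasFDerivAt.const_add _
  have hαU : ∀ z ∈ Slice, α z ∈ USet := fun z hz => by
    show (0:ℝ) < α z 2
    simpa [hαdef, Slice] using hz
  have hXd : ∀ z ∈ Slice, DifferentiableAt ℝ X (α z) := fun z hz =>
    (hX.contDiffAt (isOpen_U.mem_nhds (hαU z hz))).differentiableAt (by simp)
  have hcomp : ∀ z ∈ Slice, ∀ i : Fin 4, HasFDerivAt (fun w => X (α w) i)
      ((ContinuousLinearMap.proj i).comp ((fderiv ℝ X (α z)).comp J)) z := by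
    intro z hz i
    exact hasFDerivAt_pi'.1 ((hXd z hz).hasFDerivAt.comp z (hα z)) i
  -- directional derivative facts on the slice
  have hdir : ∀ z ∈ Slice, ∀ w : ℝ × ℝ, ∀ i : Fin 4,
      ((ContinuousLinearMap.proj i).comp ((fderiv ℝ X (α z)).comp J)) w
        = w.1 * fderiv ℝ X (α z) ![0,0,1,0] i + w.2 * fderiv ℝ X (α z) ![0,0,0,1] i := by
    intro z hz w i
    rw [ContinuousLinearMap.comp_apply, ContinuousLinearMap.comp_apply, hJw w, map_add,
      map_smul, map_smul]
    simp
  have hdir' : ∀ z ∈ Slice, ∀ w : ℝ × ℝ, ∀ i : Fin 4,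
      (fderiv ℝ X (α z)) (J w) i
        = w.1 * fderiv ℝ X (α z) ![0,0,1,0] i + w.2 * fderiv ℝ X (α z) ![0,0,0,1] i := by
    intro z hz w i
    rw [hJw w, map_add, map_smul, map_smul]
    simp
  have hz2 : ∀ z ∈ Slice, (α z) 2 = z.1 := fun z _ => rfl
  have hz3 : ∀ z ∈ Slice, (α z) 3 = z.2 := fun z _ => rfl
  -- scalar derivative components
  have hD3z : ∀ z ∈ Slice, ∀ i : Fin 4,
      fderiv ℝ X (α z) ![0,0,0,1] i = (![0,0,0,-μ₁] : V) i := by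
    intro z hz i
    rw [hD3 (α z) (by simpa [hαdef, Slice] using hz)]
  have hD2z : ∀ z ∈ Slice, ∀ i : Fin 4,
      fderiv ℝ X (α z) ![0,0,1,0] i
        = (![0, 0, X (α z) 2, -(μ₁ * z.2) - X (α z) 3 + ν₁] : V) i / z.1 := by
    intro z hz i
    have h := congrFun (hD2 (α z) (by simpa [hαdef, Slice] using hz)) i
    simp only [Pi.smul_apply, smul_eq_mul, hz2 z hz, hz3 z hz] at h
    rw [eq_div_iff (ne_of_gt (by exact hz)), mul_comm]
    exact h
  have hpinS : (p 2, p 3) ∈ Slice := hp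
  have hαp : α (p 2, p 3) = p := by
    funext i; fin_cases i <;> rfl
  have hα1 : α (1, 0) = b (p 0, p 1) := by
    funext i; fin_cases i <;> rfl
  -- component 0 and 1
  have hconst01 : ∀ j : Fin 4, (![0, 0, X (α (1,0)) 2, -(μ₁ * (0:ℝ)) - X (α (1,0)) 3 + ν₁] : V) j = (![0, 0, X (α (1,0)) 2, -(μ₁ * (0:ℝ)) - X (α (1,0)) 3 + ν₁] : V) j := fun _ => rfl
  have key0 : X p 0 = X (b (p 0, p 1)) 0 := by
    have := const_on_Slice (fun w => X (α w) 0) ?_ hpinS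
    · simpa only [hαp, hα1] using this
    intro z hz
    have h := hcomp z hz 0
    convert h using 1
    refine (ContinuousLinearMap.ext fun w => ?_).symm
    rw [hdir z hz w 0, hD3z z hz 0, hD2z z hz 0]
    simp
  have key1 : X p 1 = X (b (p 0, p 1)) 1 := by
    have := const_on_Slice (fun w => X (α w) 1) ?_ hpinS
    · simpa only [hαp, hα1] using this
    intro z hz
    have h := hcomp z hz 1
    convert h using 1
    refine (ContinuousLinearMap.ext fun w => ?_).symm
    rw [hdir z hz w 1, hD3z z hz 1, hD2z z hz 1]
    simp
  -- component 2
  have key2 : X p 2 / p 2 = X (b (p 0, p 1)) 2 / 1 := by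
    have := const_on_Slice (fun w => X (α w) 2 / w.1) ?_ hpinS
    · simpa only [hαp, hα1] using this
    intro z hz
    have hz1 : z.1 ≠ 0 := ne_of_gt hz
    have hinv : HasFDerivAt (fun w : ℝ × ℝ => (w.1)⁻¹)
        ((smulRight (1 : ℝ →L[ℝ] ℝ) (-(z.1 ^ 2)⁻¹)).comp (ContinuousLinearMap.fst ℝ ℝ ℝ)) z :=
      (hasFDerivAt_inv hz1).comp z hasFDerivAt_fst
    have h := (hcomp z hz 2).mul hinv
    have h' : HasFDerivAt (fun w : ℝ × ℝ => X (α w) 2 / w.1)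
        ((X (α z) 2) • ((smulRight (1 : ℝ →L[ℝ] ℝ) (-(z.1 ^ 2)⁻¹)).comp
            (ContinuousLinearMap.fst ℝ ℝ ℝ))
          + (z.1)⁻¹ • ((ContinuousLinearMap.proj (2 : Fin 4)).comp
              ((fderiv ℝ X (α z)).comp J))) z := by
      simpa [div_eq_mul_inv, Pi.mul_def] using h
    convert h' using 1
    refine (ContinuousLinearMap.ext fun w => ?_).symm
    rw [ContinuousLinearMap.add_apply]
    simp only [ContinuousLinearMap.smul_apply, ContinuousLinearMap.comp_apply,
      ContinuousLinearMap.smulRight_apply, ContinuousLinearMap.one_apply,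
      ContinuousLinearMap.coe_fst', smul_eq_mul, ContinuousLinearMap.zero_apply,
      ContinuousLinearMap.proj_apply]
    rw [hdir' z hz w 2, hD3z z hz 2, hD2z z hz 2]
    simp only [Matrix.cons_val_zero, Matrix.cons_val_one, Matrix.head_cons,
      Matrix.cons_val_two, Matrix.tail_cons, Matrix.cons_val_three]
    field_simp
    ring
  -- component 3
  have key3 : p 2 * (X p 3 + μ₁ * p 3 - ν₁)
      = 1 * (X (b (p 0, p 1)) 3 + μ₁ * 0 - ν₁) := by
    have := const_on_Slice (fun w => w.1 * (X (α w) 3 + μ₁ * w.2 - ν₁)) ?_ hpinS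
    · simpa only [hαp, hα1] using this
    intro z hz
    have hz1 : z.1 ≠ 0 := ne_of_gt hz
    have h := hasFDerivAt_fst.mul (((hcomp z hz 3).add (hasFDerivAt_snd.const_mul μ₁)).sub_const ν₁)
    simp only [Pi.mul_def, Pi.add_def] at h
    refine h.congr_fderiv ?_
    refine (ContinuousLinearMap.ext fun w => ?_).symm
    rw [ContinuousLinearMap.add_apply]
    simp only [ContinuousLinearMap.smul_apply, ContinuousLinearMap.add_apply,
      ContinuousLinearMap.coe_fst', ContinuousLinearMap.coe_snd',
      smul_eq_mul, ContinuousLinearMap.zero_apply, ContinuousLinearMap.proj_apply]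
    rw [hdir z hz w 3, hD3z z hz 3, hD2z z hz 3]
    simp only [Matrix.cons_val_zero, Matrix.cons_val_one, Matrix.head_cons,
      Matrix.cons_val_two, Matrix.tail_cons, Matrix.cons_val_three]
    field_simp
    ring
  -- assemble
  have hp' : p 2 ≠ 0 := ne_of_gt hp
  funext i
  fin_cases i <;> simp
  · exact key0
  · exact key1
  · rw [div_one] at key2
    field_simp at key2
    linarith [key2]
  · field_simp at key3 ⊢
    linarith [key3]

end Stage4
def π01 : V →L[ℝ] ℝ × ℝ := (ContinuousLinearMap.proj 0).prod (ContinuousLinearMap.proj 1)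

lemma π01_apply (q : V) : π01 q = (q 0, q 1) := rfl

theorem backward (X : V → V) (c₁ c₂ : ℝ) (a : Fin 4 → (ℝ × ℝ → ℝ))
    (ha : ∀ i, ContDiff ℝ (⊤ : ℕ∞) (a i))
    (hform : ∀ p : V, 0 < p 2 →
      X p = ![a 0 (p 0, p 1), a 1 (p 0, p 1), (a 2 (p 0, p 1) - c₂) * p 2,
              c₁ + c₂ * p 3 + a 3 (p 0, p 1) / p 2]) :
    ∀ K ∈ Submodule.span ℝ ({solK₁, solK₂} : Set (V → V)),
      ∃ μ₁ μ₂ : ℝ, ∀ p : V, 0 < p 2 →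
        vfLieBracket X K p = μ₁ • solK₁ p + μ₂ • solK₂ p := by
  intro K hK
  rw [Submodule.mem_span_pair] at hK
  obtain ⟨m, n, rfl⟩ := hK
  refine ⟨n * c₁ - m * c₂, 0, fun p hp => ?_⟩
  have hp' : p 2 ≠ 0 := ne_of_gt hp
  set F : V → V := fun q => ![a 0 (q 0, q 1), a 1 (q 0, q 1), (a 2 (q 0, q 1) - c₂) * q 2,
              c₁ + c₂ * q 3 + a 3 (q 0, q 1) / q 2] with hFdef
  have hXF : X =ᶠ[nhds p] F :=
    Filter.eventuallyEq_of_mem (isOpen_U.mem_nhds hp) (fun q hq => hform q hq)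
  -- derivative of K
  have hKfun : (m • solK₁ + n • solK₂) = fun q => (n • L2 : V →L[ℝ] V) q + m • (![0,0,0,1] : V) := by
    funext q i
    fin_cases i <;> simp [solK₁, solK₂, L2_apply] <;> ring
  have hKd : HasFDerivAt (m • solK₁ + n • solK₂) (n • L2 : V →L[ℝ] V) p := by
    rw [hKfun]; exact (n • L2 : V →L[ℝ] V).hasFDerivAt.add_const _
  have hKval : (m • solK₁ + n • solK₂) p = ![0, 0, -(n * p 2), m + n * p 3] := by
    funext i
    fin_cases i <;> simp [solK₁, solK₂] <;> ring
  -- derivatives of the components of F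
  have hq01 : ∀ (i : Fin 4) (q : V),
      HasFDerivAt (fun q : V => a i (q 0, q 1)) ((fderiv ℝ (a i) (q 0, q 1)).comp π01) q := by
    intro i q
    have h1 : HasFDerivAt (a i) (fderiv ℝ (a i) (q 0, q 1)) (π01 q) :=
      (((ha i).differentiable (by simp)) _).hasFDerivAt
    exact h1.comp q π01.hasFDerivAt
  have hdiv : HasFDerivAt (fun q : V => a 3 (q 0, q 1) / q 2)
      ((a 3 (p 0, p 1)) • ((smulRight (1 : ℝ →L[ℝ] ℝ) (-(p 2 ^ 2)⁻¹)).comp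
          (ContinuousLinearMap.proj 2))
        + (p 2)⁻¹ • ((fderiv ℝ (a 3) (p 0, p 1)).comp π01)) p := by
    have h2 : HasFDerivAt (fun q : V => (q 2)⁻¹)
        ((smulRight (1 : ℝ →L[ℝ] ℝ) (-(p 2 ^ 2)⁻¹)).comp (ContinuousLinearMap.proj 2)) p :=
      (hasFDerivAt_inv hp').comp p (hasFDerivAt_apply 2 p)
    have := (hq01 3 p).mul h2
    simpa [div_eq_mul_inv, Pi.mul_def] using this
  have hFd : HasFDerivAt F (ContinuousLinearMap.pi
      ![(fderiv ℝ (a 0) (p 0, p 1)).comp π01,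
        (fderiv ℝ (a 1) (p 0, p 1)).comp π01,
        (a 2 (p 0, p 1) - c₂) • ContinuousLinearMap.proj 2
          + p 2 • ((fderiv ℝ (a 2) (p 0, p 1)).comp π01),
        c₂ • ContinuousLinearMap.proj 3
          + ((a 3 (p 0, p 1)) • ((smulRight (1 : ℝ →L[ℝ] ℝ) (-(p 2 ^ 2)⁻¹)).comp
              (ContinuousLinearMap.proj 2))
            + (p 2)⁻¹ • ((fderiv ℝ (a 3) (p 0, p 1)).comp π01))]) p := by
    apply hasFDerivAt_pi'.2
    intro i
    fin_cases i <;>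
      simp only [ContinuousLinearMap.proj_pi, hFdef, Matrix.cons_val_zero, Matrix.cons_val_one,
        Matrix.head_cons, Matrix.cons_val_two, Matrix.tail_cons, Matrix.cons_val_three]
    · exact hq01 0 p
    · exact hq01 1 p
    · exact ((hq01 2 p).sub_const c₂).mul (hasFDerivAt_apply 2 p)
    · exact (((hasFDerivAt_apply 3 p).const_mul c₂).const_add c₁).add hdiv
  -- put everything together
  unfold vfLieBracket
  rw [hKd.fderiv, hXF.fderiv_eq, hFd.fderiv, hKval, hform p hp]
  funext i
  fin_cases i
  all_goals
    try simp [L2_apply, ContinuousLinearMap.pi_apply, π01_apply, solK₁, solK₂, Prod.mk_zero_zero]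
  all_goals try field_simp
  all_goals try ring


theorem main (X : V → V) (hX : ContDiffOn ℝ (⊤ : ℕ∞) X {p : Fin 4 → ℝ | 0 < p 2}) :
    (∀ K ∈ Submodule.span ℝ ({solK₁, solK₂} : Set ((Fin 4 → ℝ) → (Fin 4 → ℝ))),
      ∃ μ₁ μ₂ : ℝ, ∀ p : Fin 4 → ℝ, 0 < p 2 →
        vfLieBracket X K p = μ₁ • solK₁ p + μ₂ • solK₂ p) ↔
    (∃ c₁ c₂ : ℝ, ∃ a : Fin 4 → (ℝ × ℝ → ℝ),
      (∀ i, ContDiff ℝ (⊤ : ℕ∞) (a i)) ∧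
      ∀ p : Fin 4 → ℝ, 0 < p 2 →
        X p = ![a 0 (p 0, p 1),
                a 1 (p 0, p 1),
                (a 2 (p 0, p 1) - c₂) * p 2,
                c₁ + c₂ * p 3 + a 3 (p 0, p 1) / p 2]) := by
  have hX' : ContDiffOn ℝ (⊤ : ℕ∞) X USet := hX
  constructor
  · intro h
    obtain ⟨μ₁, μ₂, h1⟩ := h solK₁ (Submodule.subset_span (Set.mem_insert _ _))
    obtain ⟨ν₁, ν₂, h2⟩ := h solK₂ (Submodule.subset_span (Set.mem_insert_of_mem _ rfl))
    have hD3 := stage1 X μ₁ μ₂ h1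
    have hD2 := stage2 X μ₁ μ₂ ν₁ ν₂ hD3 h2
    obtain ⟨hμ₂, hν₂⟩ := stage3 X hX' μ₁ μ₂ ν₁ ν₂ hD3 hD2
    subst hμ₂
    subst hν₂
    have hD3' : ∀ p : V, 0 < p 2 →
        fderiv ℝ X p ![0,0,0,1] = ![0, 0, 0, -μ₁] := by
      intro p hp
      rw [hD3 p hp]
      funext i
      fin_cases i <;> norm_num
    have hD2' : ∀ p : V, 0 < p 2 → p 2 • fderiv ℝ X p ![0,0,1,0] =
        ![0, 0, X p 2, -(μ₁ * p 3) - X p 3 + ν₁] := by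
      intro p hp
      rw [hD2 p hp]
      funext i
      fin_cases i <;> norm_num
    exact stage4 X hX' μ₁ ν₁ hD3' hD2'
  · rintro ⟨c₁, c₂, a, ha, hform⟩
    exact backward X c₁ c₂ a ha hform

end S2

/-- A smooth vector field `X` on `U = ℝ × ℝ × (0,∞) × ℝ` (coordinates `(x¹, x², r, v)`)
preserves the solvable Killing algebra `𝔨 = ⟨∂_v, v∂_v − r∂_r⟩` (i.e. `⁅X, K⁆ ∈ 𝔨` for
all `K ∈ 𝔨`) if and only if
`X = a₁(x)∂_{x¹} + a₂(x)∂_{x²} + (a₃(x) − c₂)·r ∂_r + (c₁ + c₂·v + a₄(x)/r) ∂_v`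
for constants `c₁, c₂` and smooth functions `a₁, a₂, a₃, a₄` of `(x¹, x²)`. -/
theorem preserving_sol2_killing_algebra_iff
    (X : (Fin 4 → ℝ) → (Fin 4 → ℝ))
    (hX : ContDiffOn ℝ (⊤ : ℕ∞) X {p : Fin 4 → ℝ | 0 < p 2}) :
    (∀ K ∈ Submodule.span ℝ ({solK₁, solK₂} : Set ((Fin 4 → ℝ) → (Fin 4 → ℝ))),
      ∃ μ₁ μ₂ : ℝ, ∀ p : Fin 4 → ℝ, 0 < p 2 →
        vfLieBracket X K p = μ₁ • solK₁ p + μ₂ • solK₂ p) ↔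
    (∃ c₁ c₂ : ℝ, ∃ a : Fin 4 → (ℝ × ℝ → ℝ),
      (∀ i, ContDiff ℝ (⊤ : ℕ∞) (a i)) ∧
      ∀ p : Fin 4 → ℝ, 0 < p 2 →
        X p = ![a 0 (p 0, p 1),
                a 1 (p 0, p 1),
                (a 2 (p 0, p 1) - c₂) * p 2,
                c₁ + c₂ * p 3 + a 3 (p 0, p 1) / p 2]) := by
  exact S2.main X hX
end
end
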